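/- Let a : ℝ → ℝ be continuously differentiable, 1-periodic, and strictly positive. Then ⟨a⁻³a′·[[[[a]]]]⟩ = ⟨a·[[[[a⁻³a′]]]]⟩ = −(1/2)⟨a·[[a⁻²]]⟩. (This is the closed form of the homogenization coefficient C₄, up to the factor 1/ρ⁽⁰⁾.) -/

import Mathlib

open MeasureTheory Matrix

/-- The mean of a function over one period: `⟨b⟩ = ∫₀¹ b(y) dy`. -/
noncomputable def pmean (b : ℝ → ℝ) : ℝ := ∫ y in (0:ℝ)..1, b y

/-- The fluctuating (mean-zero) part: `{b} = b − ⟨b⟩`. -/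
noncomputable def pfluct (b : ℝ → ℝ) : ℝ → ℝ := fun y => b y - pmean b

/-- The mean-zero primitive of the fluctuating part:
`[[b]](y) = ∫₀^y {b}(ξ) dξ − ∫₀¹ (∫₀^s {b}(ξ) dξ) ds`. -/
noncomputable def pbracket (b : ℝ → ℝ) : ℝ → ℝ :=
  fun y => (∫ ξ in (0:ℝ)..y, pfluct b ξ) - ∫ s in (0:ℝ)..1, (∫ ξ in (0:ℝ)..s, pfluct b ξ)

/-!
Since `a⁻³a′ = -(1/2)(a⁻²)′` and `a⁻²` is periodic, `[[a⁻³a′]] = -(1/2){a⁻²}`. Moreover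
`[[·]]` is antisymmetric for the pairing `⟨f·g⟩`: `([[f]]·[[g]])′ = {f}·[[g]] + [[f]]·{g}`
integrates to zero over `[0, 1]` because `∫₀¹ {f} = 0` forces `[[f]](1) = [[f]](0)`, and
the means `⟨f⟩`, `⟨g⟩` drop out because `⟨[[f]]⟩ = ⟨[[g]]⟩ = 0`. Moving the brackets from
`a` to `a⁻³a′` gives both identities.
-/

open intervalIntegral

section Bracket

variable {f g k : ℝ → ℝ}

lemma pmean_const_mul (c : ℝ) (f : ℝ → ℝ) : pmean (fun y => c * f y) = c * pmean f :=
  intervalIntegral.integral_const_mul c f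

lemma integral_pfluct (hf : IntervalIntegrable f volume 0 1) :
    ∫ y in (0:ℝ)..1, pfluct f y = 0 := by
  simp [pfluct, integral_sub hf intervalIntegrable_const, pmean]

lemma pmean_pfluct_mul (hfk : IntervalIntegrable (fun y => f y * k y) volume 0 1)
    (hk : IntervalIntegrable k volume 0 1) (hk0 : pmean k = 0) :
    pmean (fun y => pfluct f y * k y) = pmean (fun y => f y * k y) := by
  unfold pmean at hk0 ⊢
  simp only [pfluct, sub_mul]
  rw [integral_sub hfk (hk.const_mul _), intervalIntegral.integral_const_mul, hk0, mul_zero,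
    sub_zero]

lemma hasDerivAt_pbracket (hf : Continuous f) (y : ℝ) :
    HasDerivAt (pbracket f) (pfluct f y) y := by
  have hfl : Continuous (pfluct f) := hf.sub continuous_const
  exact (integral_hasDerivAt_right (hfl.intervalIntegrable 0 y)
    (hfl.stronglyMeasurableAtFilter _ _) hfl.continuousAt).sub_const _

lemma continuous_pbracket (hf : Continuous f) : Continuous (pbracket f) :=
  continuous_iff_continuousAt.2 fun y => (hasDerivAt_pbracket hf y).continuousAt

lemma pmean_pbracket (hf : Continuous f) : pmean (pbracket f) = 0 := by
  have hprim : Continuous fun u => ∫ ξ in (0:ℝ)..u, pfluct f ξ :=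
    continuous_primitive (fun _ _ => (hf.sub continuous_const).intervalIntegrable _ _) 0
  unfold pmean pbracket
  simp [integral_sub (hprim.intervalIntegrable 0 1) intervalIntegrable_const]

lemma pbracket_one (hf : IntervalIntegrable f volume 0 1) : pbracket f 1 = pbracket f 0 := by
  simp [pbracket, integral_pfluct hf]

lemma pmean_mul_pbracket (hf : Continuous f) (hg : Continuous g) :
    pmean (fun y => f y * pbracket g y) = -pmean (fun y => pbracket f y * g y) := by
  have hbf := continuous_pbracket hf
  have hbg := continuous_pbracket hg
  have hderiv : ∀ x ∈ Set.uIcc (0:ℝ) 1, HasDerivAt (fun y => pbracket f y * pbracket g y)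
      (pfluct f x * pbracket g x + pfluct g x * pbracket f x) x := fun x _ =>
    ((hasDerivAt_pbracket hf x).mul (hasDerivAt_pbracket hg x)).congr_deriv (by ring)
  have hsum : pmean (fun y => pfluct f y * pbracket g y)
      + pmean (fun y => pfluct g y * pbracket f y) = 0 := by
    have hint : ∀ {u v : ℝ → ℝ}, Continuous u → Continuous v →
        IntervalIntegrable (fun y => pfluct u y * pbracket v y) volume 0 1 := fun hu hv =>
      ((hu.sub continuous_const).mul (continuous_pbracket hv)).intervalIntegrable 0 1
    unfold pmean
    rw [← integral_add (hint hf hg) (hint hg hf), integral_eq_sub_of_hasDerivAt hderiv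
      ((hint hf hg).add (hint hg hf)), pbracket_one (hf.intervalIntegrable 0 1),
      pbracket_one (hg.intervalIntegrable 0 1), sub_self]
  rw [pmean_pfluct_mul ((hf.mul hbg).intervalIntegrable 0 1) (hbg.intervalIntegrable 0 1)
      (pmean_pbracket hg),
    pmean_pfluct_mul ((hg.mul hbf).intervalIntegrable 0 1) (hbf.intervalIntegrable 0 1)
      (pmean_pbracket hf)] at hsum
  simp only [mul_comm (pbracket f _)]
  linarith

lemma pbracket_eq_pfluct_of_hasDerivAt {b b' : ℝ → ℝ} (hb : ∀ x, HasDerivAt b (b' x) x)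
    (hb' : Continuous b') (hper : b 1 = b 0) : pbracket b' = pfluct b := by
  have hprim : ∀ y, ∫ x in (0:ℝ)..y, b' x = b y - b 0 := fun y =>
    integral_eq_sub_of_hasDerivAt (fun x _ => hb x) (hb'.intervalIntegrable 0 y)
  have hmean : pmean b' = 0 := by rw [pmean, hprim, hper, sub_self]
  have hcb : Continuous b := continuous_iff_continuousAt.2 fun x => (hb x).continuousAt
  funext y
  simp only [pbracket, pfluct, hmean, sub_zero, hprim]
  rw [integral_sub (hcb.intervalIntegrable 0 1) intervalIntegrable_const, pmean]
  simp

end Bracket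

lemma hasDerivAt_neg_half_inv_sq {a : ℝ → ℝ} {a' y : ℝ} (hd : HasDerivAt a a' y)
    (hy : a y ≠ 0) : HasDerivAt (fun z => -(1/2) * (a z ^ 2)⁻¹) ((a y ^ 3)⁻¹ * a') y := by
  refine ((hd.pow 2).inv (pow_ne_zero 2 hy)).const_mul _ |>.congr_deriv ?_
  simp only [Pi.pow_apply]
  field_simp
  ring

/-- For `a` continuously differentiable, 1-periodic and strictly positive,
`⟨a⁻³a′·[[[[a]]]]⟩ = ⟨a·[[[[a⁻³a′]]]]⟩ = −(1/2)⟨a·[[a⁻²]]⟩`. -/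
theorem statement7 (a : ℝ → ℝ) (ha : ContDiff ℝ 1 a) (hper : Function.Periodic a 1)
    (hpos : ∀ y, 0 < a y) :
    pmean (fun y => (a y ^ 3)⁻¹ * deriv a y * pbracket (pbracket a) y)
      = pmean (fun y => a y * pbracket (pbracket (fun z => (a z ^ 3)⁻¹ * deriv a z)) y) ∧
    pmean (fun y => (a y ^ 3)⁻¹ * deriv a y * pbracket (pbracket a) y)
      = -(1/2) * pmean (fun y => a y * pbracket (fun z => (a z ^ 2)⁻¹) y) := by
  set g : ℝ → ℝ := fun z => (a z ^ 3)⁻¹ * deriv a z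
  set h : ℝ → ℝ := fun z => (a z ^ 2)⁻¹
  have hne : ∀ y, a y ≠ 0 := fun y => (hpos y).ne'
  have hca : Continuous a := ha.continuous
  have hcg : Continuous g :=
    ((hca.pow 3).inv₀ fun y => pow_ne_zero 3 (hne y)).mul (ha.continuous_deriv le_rfl)
  have hch : Continuous h := (hca.pow 2).inv₀ fun y => pow_ne_zero 2 (hne y)
  have hbracket_g : pbracket g = pfluct (fun z => -(1/2) * h z) :=
    pbracket_eq_pfluct_of_hasDerivAt
      (fun y => hasDerivAt_neg_half_inv_sq (ha.differentiable one_ne_zero y).hasDerivAt (hne y))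
      hcg
      (by simp only [h, show a 1 = a 0 by simpa using hper 0])
  have hstep : pmean (fun y => g y * pbracket (pbracket a) y)
      = -pmean (fun y => pbracket g y * pbracket a y) :=
    pmean_mul_pbracket hcg (continuous_pbracket hca)
  constructor
  · rw [hstep, pmean_mul_pbracket (continuous_pbracket hcg) hca, neg_neg]
    simp only [mul_comm (pbracket _ _)]
  · have hba := continuous_pbracket hca
    rw [hstep, hbracket_g, pmean_pfluct_mul
      (f := fun z => -(1/2) * h z)
      (((continuous_const.mul hch).mul hba).intervalIntegrable 0 1)
      (hba.intervalIntegrable 0 1) (pmean_pbracket hca)]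
    simp only [mul_assoc, pmean_const_mul]
    rw [pmean_mul_pbracket hch hca]
    simp only [mul_comm (pbracket h _)]
    ring
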